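/- Let T be a directed tree with V° ≠ ∅ and let S_λ be a weighted shift on T with weights λ = {λ_v}_{v∈V°} all of which are nonzero. If S_λ is hyponormal, then T is leafless (that is, Chi(u) ≠ ∅ for every u ∈ V); in particular, S_λ is injective and V is countably infinite. -/

import Mathlib

open Filter
open scoped ENNReal InnerProductSpace ComplexConjugate

attribute [local instance] Classical.propDecidable

noncomputable section

namespace Paper

universe u

/-- A directed tree: a directed graph which is connected (as an undirected graph), has no
(directed) circuits, and in which every vertex has at most one parent. -/
structure DirectedTree (V : Type*) where
  E : V → V → Prop
  connected : ∀ u v : V, Relation.ReflTransGen (fun a b => E a b ∨ E b a) u v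
  noCircuits : ∀ v : V, ¬ Relation.TransGen E v v
  par_unique : ∀ ⦃u₁ u₂ v : V⦄, E u₁ v → E u₂ v → u₁ = u₂

namespace DirectedTree

variable {V : Type*} (t : DirectedTree V)

/-- The set of children of a vertex. -/
def chi (u : V) : Set V := {v | t.E u v}

/-- `v` has a parent, i.e. `v ∈ V°`. -/
def hasPar (v : V) : Prop := ∃ u, t.E u v

/-- The parent partial function, as a total function with junk value `v` at parentless
vertices. -/
noncomputable def par (v : V) : V := if h : t.hasPar v then h.choose else v

/-- Children of a set of vertices. -/
def chiSet (W : Set V) : Set V := {v | ∃ u ∈ W, t.E u v}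

/-- `n`-fold children of a set of vertices. -/
def chiIter : ℕ → Set V → Set V
  | 0, W => W
  | n + 1, W => t.chiSet (chiIter n W)

/-- `Chi^⟨n⟩(u)`. -/
def chin (n : ℕ) (u : V) : Set V := t.chiIter n {u}

/-- The descendants of a vertex. -/
def des (u : V) : Set V := ⋃ n : ℕ, t.chin n u

/-- `λ_{u∣v} = ∏_{j=0}^{n-1} λ_{par^j(v)}` for `v ∈ Chi^⟨n⟩(u)`. -/
noncomputable def wprod (lam : V → ℂ) (n : ℕ) (v : V) : ℂ :=
  ∏ j ∈ Finset.range n, lam (t.par^[j] v)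

end DirectedTree

/-- The Hilbert space `ℓ²(V)`. -/
abbrev H2 (V : Type*) := lp (fun _ : V => ℂ) 2

/-- The basis vector `e_u ∈ ℓ²(V)`. -/
noncomputable def evec {V : Type*} (u : V) : H2 V :=
  haveI := Classical.decEq V
  lp.single 2 u 1

/-- The linear subspace `E = lin{e_u : u ∈ V}`. -/
noncomputable def espan (V : Type*) : Submodule ℂ (H2 V) :=
  Submodule.span ℂ (Set.range (evec : V → H2 V))

/-- The map `Λ_T` on all functions `V → ℂ`:
`(Λ_T f)(v) = λ_v f(par(v))` for `v ∈ V°` and `0` at the root. -/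
noncomputable def lamLin {V : Type*} (t : DirectedTree V) (lam : V → ℂ) :
    (V → ℂ) →ₗ[ℂ] (V → ℂ) where
  toFun f := fun v => if t.hasPar v then lam v * f (t.par v) else 0
  map_add' f g := by
    funext v
    by_cases h : t.hasPar v <;> simp [h, mul_add]
  map_smul' c f := by
    funext v
    by_cases h : t.hasPar v <;> simp [h] <;> ring

/-- The domain `{f ∈ ℓ²(V) : Λ_T f ∈ ℓ²(V)}` of the weighted shift. -/
noncomputable def shiftDom {V : Type*} (t : DirectedTree V) (lam : V → ℂ) :
    Submodule ℂ (H2 V) where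
  carrier := {f | Memℓp (lamLin t lam f) 2}
  zero_mem' := by
    simpa only [Set.mem_setOf_eq, lp.coeFn_zero, map_zero] using zero_memℓp
  add_mem' := by
    intro f g hf hg
    simp only [Set.mem_setOf_eq, lp.coeFn_add, map_add] at *
    exact hf.add hg
  smul_mem' := by
    intro c f hf
    simp only [Set.mem_setOf_eq] at hf ⊢
    rw [lp.coeFn_smul, LinearMap.map_smul]
    exact hf.const_smul c

/-- The weighted shift `S_λ` on the directed tree `T`, as an unbounded operator in `ℓ²(V)`. -/
noncomputable def shift {V : Type*} (t : DirectedTree V) (lam : V → ℂ) :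
    H2 V →ₗ.[ℂ] H2 V where
  domain := shiftDom t lam
  toFun :=
    { toFun := fun f => (⟨lamLin t lam f, f.2⟩ : H2 V)
      map_add' := by
        intro f g
        apply lp.ext
        simp only [Submodule.coe_add, lp.coeFn_add, map_add]
      map_smul' := by
        intro c f
        apply lp.ext
        simp only [SetLike.val_smul, lp.coeFn_smul, LinearMap.map_smul, RingHom.id_apply] }

section Operator

variable {H : Type*} [NormedAddCommGroup H] [InnerProductSpace ℂ H]

/-- `x ∈ D(Tⁿ)`. -/
def iterMem (T : H →ₗ.[ℂ] H) : ℕ → H → Prop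
  | 0, _ => True
  | n + 1, x => ∃ h : x ∈ T.domain, iterMem T n (T ⟨x, h⟩)

/-- `Tⁿ x` (junk value `0` if undefined along the way). -/
noncomputable def iterApp (T : H →ₗ.[ℂ] H) : ℕ → H → H
  | 0, x => x
  | n + 1, x => if h : x ∈ T.domain then iterApp T n (T ⟨x, h⟩) else 0

/-- The inner product in the paper's convention: `⟨x, y⟩` is linear in `x`. -/
noncomputable def pinner (x y : H) : ℂ := inner (𝕜 := ℂ) y x

/-- `E ⊆ D∞(S_λ)` where `E = lin{e_u : u ∈ V}`. -/
def spanDomInfty {V : Type*} (t : DirectedTree V) (lam : V → ℂ) : Prop :=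
  ∀ f ∈ espan V, ∀ n : ℕ, iterMem (shift t lam) n f

/-- A linear subspace `F` is a core of `T` if the graph of `T` is contained in the closure of
the graph of `T|_F`. -/
def IsCore (T : H →ₗ.[ℂ] H) (F : Submodule ℂ H) : Prop :=
  (T.graph : Set (H × H)) ⊆ closure ((T.domRestrict F).graph : Set (H × H))

/-- `f` is a quasi-analytic vector of `T`:
`f ∈ D∞(T)` and `∑_{n ≥ 1} ‖Tⁿ f‖^{-1/n} = ∞` (convention `1/0 = ∞`). -/
def QuasiAnalyticVec (T : H →ₗ.[ℂ] H) (f : H) : Prop :=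
  (∀ n : ℕ, iterMem T n f) ∧
    ∑' n : ℕ, (ENNReal.ofReal (‖iterApp T (n + 1) f‖ ^ (1 / (n + 1 : ℝ))))⁻¹ = ∞

end Operator

section NormalSubnormal

/-- A normal operator: closed, densely defined, with `D(N) = D(N*)` and `‖N* h‖ = ‖N h‖` on the
common domain. -/
structure IsNormalOp {K : Type*} [NormedAddCommGroup K] [InnerProductSpace ℂ K]
    [CompleteSpace K] (N : K →ₗ.[ℂ] K) : Prop where
  dense : Dense (N.domain : Set K)
  isClosed : N.IsClosed
  dom_adjoint : N.adjoint.domain = N.domain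
  norm_adjoint : ∀ (x : K) (hx : x ∈ N.domain) (hx' : x ∈ N.adjoint.domain),
    ‖N.adjoint ⟨x, hx'⟩‖ = ‖N ⟨x, hx⟩‖

/-- A normal extension of `S`: a Hilbert space `K`, an isometric linear embedding `J : H → K`,
and a normal operator `N` in `K` with `N (J h) = J (S h)` for all `h ∈ D(S)`. -/
structure NormalExtension {H : Type u} [NormedAddCommGroup H] [InnerProductSpace ℂ H]
    (S : H →ₗ.[ℂ] H) : Type (u + 1) where
  K : Type u
  [instNG : NormedAddCommGroup K]
  [instIP : InnerProductSpace ℂ K]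
  [instCS : CompleteSpace K]
  J : H →ₗᵢ[ℂ] K
  N : K →ₗ.[ℂ] K
  normal : IsNormalOp N
  ext_prop : ∀ x : S.domain, ∃ hx : J x ∈ N.domain, N ⟨J x, hx⟩ = J (S x)

/-- A densely defined operator is subnormal if it has a normal extension. -/
def Subnormal {H : Type u} [NormedAddCommGroup H] [InnerProductSpace ℂ H]
    (S : H →ₗ.[ℂ] H) : Prop :=
  Dense (S.domain : Set H) ∧ Nonempty (NormalExtension S)

/-- A hyponormal operator: densely defined, `D(S) ⊆ D(S*)` and `‖S* f‖ ≤ ‖S f‖` on `D(S)`. -/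
def Hyponormal {H : Type*} [NormedAddCommGroup H] [InnerProductSpace ℂ H] [CompleteSpace H]
    (S : H →ₗ.[ℂ] H) : Prop :=
  Dense (S.domain : Set H) ∧ S.domain ≤ S.adjoint.domain ∧
    ∀ (x : H) (hx : x ∈ S.domain) (hx' : x ∈ S.adjoint.domain),
      ‖S.adjoint ⟨x, hx'⟩‖ ≤ ‖S ⟨x, hx⟩‖

end NormalSubnormal

section Stieltjes

open MeasureTheory

/-- `μ` is a representing measure of `{t_n}`: a positive Borel measure on `ℝ₊`
with `t_n = ∫_0^∞ sⁿ dμ(s)` for all `n`. -/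
def IsRepMeasure (μ : Measure ℝ) (t : ℕ → ℝ) : Prop :=
  μ (Set.Iio 0) = 0 ∧ ∀ n : ℕ, Integrable (fun s => s ^ n) μ ∧ t n = ∫ s, s ^ n ∂μ

/-- `{t_n}` is a Stieltjes moment sequence. -/
def IsStieltjes (t : ℕ → ℝ) : Prop := ∃ μ : Measure ℝ, IsRepMeasure μ t

/-- A Stieltjes moment sequence is determinate if it has only one representing measure. -/
def Determinate (t : ℕ → ℝ) : Prop :=
  ∀ ⦃μ ν : Measure ℝ⦄, IsRepMeasure μ t → IsRepMeasure ν t → μ = ν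

/-- `∫_σ (1/s) dμ(s)`, with the convention `1/0 = ∞`. -/
noncomputable def recipInt (μ : Measure ℝ) (σ : Set ℝ) : ℝ≥0∞ :=
  ∫⁻ s in σ, (ENNReal.ofReal s)⁻¹ ∂μ

/-- The sequence `(θ, t_0, t_1, …)`. -/
def prepend (θ : ℝ) (t : ℕ → ℝ) : ℕ → ℝ
  | 0 => θ
  | n + 1 => t n

/-- `{t_n}` is positive definite. -/
def PosDefSeq (t : ℕ → ℝ) : Prop :=
  ∀ (n : ℕ) (α : ℕ → ℂ),
    0 ≤ (∑ k ∈ Finset.range (n + 1), ∑ l ∈ Finset.range (n + 1),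
      (t (k + l) : ℂ) * α k * (starRingEnd ℂ) (α l)).re

/-- The measure `ν_μ(σ) = ∫_σ (1/s) dμ(s) + (θ − ∫_0^∞ (1/s) dμ(s)) δ₀(σ)`. -/
noncomputable def numap (θ : ℝ) (μ : Measure ℝ) : Measure ℝ :=
  μ.withDensity (fun s => (ENNReal.ofReal s)⁻¹) +
    (ENNReal.ofReal θ - recipInt μ Set.univ) • Measure.dirac (0 : ℝ)

/-- The measure `μ_ν(σ) = ∫_σ s dν(s)`. -/
noncomputable def mumap (ν : Measure ℝ) : Measure ℝ :=
  ν.withDensity fun s => ENNReal.ofReal s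

end Stieltjes

section Consistency

open MeasureTheory

variable {V : Type*}

/-- The consistency condition \eqref{muu+} at the vertex `u`:
`μ_u(σ) = Σ_{v ∈ Chi(u)} |λ_v|² ∫_σ (1/s) dμ_v(s) + ε_u δ₀(σ)`. -/
def Consistent (t : DirectedTree V) (lam : V → ℂ) (μ : V → Measure ℝ) (ε : V → ℝ)
    (u : V) : Prop :=
  ∀ σ : Set ℝ, MeasurableSet σ →
    μ u σ = (∑' v : t.chi u, ENNReal.ofReal (‖lam (v : V)‖ ^ 2) * recipInt (μ (v : V)) σ)
      + ENNReal.ofReal (ε u) * Measure.dirac (0 : ℝ) σ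

/-- The measure `μ_u` from Lemma charsub2, built from the children measures:
`μ_u(σ) = Σ_{v ∈ Chi(u)} |λ_v|² ∫_σ (1/s) dμ_v(s) + ε_u δ₀(σ)` with
`ε_u = 1 − Σ_{v ∈ Chi(u)} |λ_v|² ∫_0^∞ (1/s) dμ_v(s)`. -/
noncomputable def consMeasure (t : DirectedTree V) (lam : V → ℂ) (μ : V → Measure ℝ)
    (u : V) : Measure ℝ :=
  Measure.sum (fun v : t.chi u =>
      ENNReal.ofReal (‖lam (v : V)‖ ^ 2) •
        (μ (v : V)).withDensity fun s => (ENNReal.ofReal s)⁻¹) +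
    (1 - ∑' v : t.chi u, ENNReal.ofReal (‖lam (v : V)‖ ^ 2) * recipInt (μ (v : V)) Set.univ) •
      Measure.dirac (0 : ℝ)

end Consistency

end Paper

open Paper MeasureTheory Filter
open scoped ENNReal

/-!
At a leaf `u ∈ V°` the basis vector `e_u` lies in `D(S_λ)` and `S_λ e_u = 0`; hyponormality then
forces `S_λ* e_u = 0`, i.e. `e_u ⊥ S_λ f` for every `f ∈ D(S_λ)`, which reads
`λ_u f(par u) = 0`. As `λ_u ≠ 0` and `D(S_λ)` is dense, this is impossible. A parentless leaf
would be an isolated vertex, excluded by connectedness and `V° ≠ ∅`. Once `T` is leafless,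
`S_λ f = 0` gives `f(u) = λ_v⁻¹ (S_λ f)(v) = 0` for a child `v` of `u`, and following children
never returns, so `V` is infinite. A vector `f ∈ D(S_λ)` with `f(u) ≠ 0` makes `S_λ f` nonzero
on all of `Chi(u)`, so every `Chi(u)` is countable and hence so is the connected tree.
-/

theorem Relation.countable_of_forall_reflTransGen {α : Type*} {r : α → α → Prop}
    (hr : ∀ a, {b | r a b}.Countable) (a₀ : α) (h : ∀ b, Relation.ReflTransGen r a₀ b) :
    Countable α := by
  let step : Set α → Set α := fun s => s ∪ ⋃ a ∈ s, {b | r a b}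
  have hcount : ∀ n, (step^[n] {a₀}).Countable := by
    intro n
    induction n with
    | zero => exact Set.countable_singleton a₀
    | succ n ih =>
      rw [Function.iterate_succ_apply']
      exact ih.union (ih.biUnion fun a _ => hr a)
  have hcover : ∀ b, ∃ n, b ∈ step^[n] {a₀} := by
    intro b
    induction h b with
    | refl => exact ⟨0, rfl⟩
    | tail _ hbc ih =>
      obtain ⟨n, hn⟩ := ih
      refine ⟨n + 1, ?_⟩
      rw [Function.iterate_succ_apply']
      exact Or.inr (Set.mem_biUnion hn hbc)
  rw [← Set.countable_univ_iff]
  exact (Set.countable_iUnion hcount).mono fun b _ => Set.mem_iUnion.mpr (hcover b)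

theorem Memℓp.countable_support {α E : Type*} [NormedAddCommGroup E] {p : ℝ≥0∞} {f : α → E}
    (hf : Memℓp f p) (hp : 0 < p.toReal) : (Function.support f).Countable := by
  convert ((memℓp_gen_iff hp).mp hf).countable_support using 1
  ext i
  simp [Real.rpow_eq_zero_iff_of_nonneg (norm_nonneg _), hp.ne']

theorem lp.exists_mem_apply_ne_zero_of_dense {α : Type*} {E : α → Type*}
    [∀ i, NormedAddCommGroup (E i)] [∀ i, Nontrivial (E i)] {p : ℝ≥0∞} [Fact (1 ≤ p)]
    {s : Set (lp E p)} (hs : Dense s) (i : α) : ∃ f ∈ s, f i ≠ 0 := by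
  classical
  by_contra! h
  obtain ⟨x, hx⟩ := exists_ne (0 : E i)
  have hclosed : IsClosed {f : lp E p | f i = 0} :=
    isClosed_eq (lp.lipschitzWith_one_eval p i).continuous continuous_const
  have hsingle : lp.single p i x ∈ {f : lp E p | f i = 0} :=
    hclosed.closure_subset_iff.mpr h (hs _)
  simp at hsingle
  exact hx hsingle

namespace Paper

namespace DirectedTree

variable {V : Type*} (t : DirectedTree V)

theorem E_par {v : V} (h : t.hasPar v) : t.E (t.par v) v := by
  rw [par, dif_pos h]
  exact h.choose_spec

theorem par_eq_of_E {u v : V} (h : t.E u v) : t.par v = u :=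
  t.par_unique (t.E_par ⟨u, h⟩) h

theorem chi_nonempty_of_not_hasPar (hV : ∃ v, t.hasPar v) {u : V} (hu : ¬ t.hasPar u) :
    (t.chi u).Nonempty := by
  obtain ⟨w, hw⟩ := hV
  rcases (t.connected u w).cases_head with rfl | ⟨c, huc | hcu, _⟩
  · exact absurd hw hu
  · exact ⟨c, huc⟩
  · exact absurd ⟨c, hcu⟩ hu

theorem infinite_of_forall_chi_nonempty [Nonempty V] (h : ∀ u, (t.chi u).Nonempty) :
    Infinite V := by
  by_contra hfin
  have : Finite V := not_infinite_iff_finite.mp hfin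
  have : Std.Irrefl (flip (Relation.TransGen t.E)) := ⟨t.noCircuits⟩
  have : IsTrans V (flip (Relation.TransGen t.E)) := ⟨fun _ _ _ hab hbc => hbc.trans hab⟩
  obtain ⟨m, -, hm⟩ := (Finite.wellFounded_of_trans_of_irrefl
    (flip (Relation.TransGen t.E))).has_min Set.univ Set.univ_nonempty
  obtain ⟨c, hc⟩ := h m
  exact hm c trivial (.single hc)

theorem countable_of_forall_chi_countable (h : ∀ u, (t.chi u).Countable) : Countable V := by
  rcases isEmpty_or_nonempty V with _ | ⟨⟨a₀⟩⟩
  · infer_instance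
  refine Relation.countable_of_forall_reflTransGen (fun a => ?_) a₀ (t.connected a₀)
  have hpar : {b | t.E b a}.Subsingleton := fun _ h₁ _ h₂ => t.par_unique h₁ h₂
  exact (h a).union hpar.countable

end DirectedTree

theorem evec_apply {V : Type*} (u v : V) : (evec u : V → ℂ) v = if v = u then 1 else 0 := by
  classical
  rw [evec, lp.single_apply, Pi.single_apply]

theorem inner_evec_left {V : Type*} (u : V) (g : H2 V) : inner ℂ (evec u) g = g u := by
  classical
  simp [evec, lp.inner_single_left, RCLike.inner_apply]

theorem Hyponormal.inner_eq_zero_of_apply_eq_zero {H : Type*} [NormedAddCommGroup H]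
    [InnerProductSpace ℂ H] [CompleteSpace H] {S : H →ₗ.[ℂ] H} (hS : Hyponormal S)
    {x : S.domain} (hx : S x = 0) (y : S.domain) : inner ℂ (x : H) (S y) = 0 := by
  obtain ⟨hdense, hdom, hnorm⟩ := hS
  have hx' : (x : H) ∈ S.adjoint.domain := hdom x.2
  have hadj : S.adjoint ⟨x, hx'⟩ = 0 := by
    simpa [hx] using hnorm x x.2 hx'
  rw [← LinearPMap.adjoint_isFormalAdjoint hdense ⟨x, hx'⟩ y, hadj, inner_zero_left]

section Shift

variable {V : Type*} (t : DirectedTree V) (lam : V → ℂ)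

theorem shift_apply (x : (shift t lam).domain) (v : V) :
    (shift t lam x : H2 V) v = lamLin t lam x v :=
  rfl

theorem lamLin_apply_of_E (f : V → ℂ) {u v : V} (h : t.E u v) :
    lamLin t lam f v = lam v * f u := by
  simp [lamLin, show t.hasPar v from ⟨u, h⟩, t.par_eq_of_E h]

theorem lamLin_evec_of_chi_eq_empty {u : V} (hu : t.chi u = ∅) : lamLin t lam (evec u) = 0 := by
  funext v
  by_cases hv : t.hasPar v
  · have hpar : t.par v ≠ u := fun he => (Set.eq_empty_iff_forall_notMem.mp hu) v (he ▸ t.E_par hv)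
    simp [lamLin, hv, evec_apply, hpar]
  · simp [lamLin, hv]

variable {t lam}

theorem chi_nonempty_of_hyponormal (hnz : ∀ v, t.hasPar v → lam v ≠ 0)
    (hS : Hyponormal (shift t lam)) {u : V} (hu : t.hasPar u) : (t.chi u).Nonempty := by
  by_contra hleaf
  have hzero := lamLin_evec_of_chi_eq_empty t lam (Set.not_nonempty_iff_eq_empty.mp hleaf)
  have hdom : evec u ∈ (shift t lam).domain := by
    change Memℓp (lamLin t lam (evec u)) 2
    rw [hzero]
    exact zero_memℓp
  have hSe : shift t lam ⟨evec u, hdom⟩ = 0 := lp.ext hzero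
  obtain ⟨f, hf, hfpar⟩ := lp.exists_mem_apply_ne_zero_of_dense hS.1 (t.par u)
  have horth := hS.inner_eq_zero_of_apply_eq_zero hSe ⟨f, hf⟩
  rw [inner_evec_left, shift_apply, lamLin_apply_of_E t lam _ (t.E_par hu)] at horth
  exact mul_ne_zero (hnz u hu) hfpar horth

theorem shift_injective_of_forall_chi_nonempty (hnz : ∀ v, t.hasPar v → lam v ≠ 0)
    (hleaf : ∀ u, (t.chi u).Nonempty) :
    Function.Injective fun f : (shift t lam).domain => shift t lam f := by
  intro f g hfg
  ext u
  obtain ⟨v, huv⟩ := hleaf u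
  have hv := congrArg (fun x : H2 V => x v) hfg
  simp only [shift_apply, lamLin_apply_of_E t lam _ huv] at hv
  exact mul_left_cancel₀ (hnz v ⟨u, huv⟩) hv

theorem chi_countable_of_dense (hnz : ∀ v, t.hasPar v → lam v ≠ 0)
    (hdense : Dense ((shift t lam).domain : Set (H2 V))) (u : V) : (t.chi u).Countable := by
  obtain ⟨f, hf, hfu⟩ := lp.exists_mem_apply_ne_zero_of_dense hdense u
  refine ((shift t lam ⟨f, hf⟩).2.countable_support (by norm_num)).mono fun v huv => ?_
  change (shift t lam ⟨f, hf⟩ : H2 V) v ≠ 0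
  rw [shift_apply, lamLin_apply_of_E t lam _ huv]
  exact mul_ne_zero (hnz v ⟨u, huv⟩) hfu

end Shift

end Paper

/-- hyponormal weighted shifts with nonzero weights live on leafless trees. -/
theorem stmt19 {V : Type*} (t : Paper.DirectedTree V) (lam : V → ℂ)
    (hV : ∃ v : V, t.hasPar v) (hnz : ∀ v : V, t.hasPar v → lam v ≠ 0)
    (hhyp : Hyponormal (shift t lam)) :
    (∀ u : V, (t.chi u).Nonempty) ∧
    (Function.Injective fun f : (shift t lam).domain => shift t lam f) ∧
    Countable V ∧ Infinite V := by
  have hleaf : ∀ u, (t.chi u).Nonempty := fun u =>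
    if hu : t.hasPar u then chi_nonempty_of_hyponormal hnz hhyp hu
    else t.chi_nonempty_of_not_hasPar hV hu
  have : Nonempty V := ⟨hV.choose⟩
  exact ⟨hleaf, shift_injective_of_forall_chi_nonempty hnz hleaf,
    t.countable_of_forall_chi_countable (chi_countable_of_dense hnz hhyp.1),
    t.infinite_of_forall_chi_nonempty hleaf⟩
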